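/- arXiv:1808.03345 — 3 statements merged into one kernel-verified Lean document; each statement's English description precedes it below -/
import Mathlib

section
/- No linear order that is an η₁-ordering is Dedekind complete, and in particular no η₁-ordered field is isomorphic to ℝ; moreover, every η₁-ordering has cardinality at least ℵ₁, and in fact at least the continuum 2^ℵ₀. -/
/-- No η₁-ordering is Dedekind complete, and every η₁-ordering has cardinality at least
ℵ₁, indeed at least the continuum. -/
theorem eta_one_not_dedekind_complete_and_cardinality
    (L : Type*) [LinearOrder L]
    (heta : ∀ A B : Set L, A.Countable → B.Countable → (∀ a ∈ A, ∀ b ∈ B, a < b) →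
      ∃ y : L, (∀ a ∈ A, a < y) ∧ (∀ b ∈ B, y < b)) :
    ¬(∀ S : Set L, S.Nonempty → BddAbove S → ∃ s : L, IsLUB S s) ∧
      Cardinal.aleph 1 ≤ Cardinal.mk L ∧ Cardinal.continuum ≤ Cardinal.mk L := by
  -- basic structure
  have hne : Nonempty L := by
    obtain ⟨y, -⟩ := heta ∅ ∅ Set.countable_empty Set.countable_empty (by simp)
    exact ⟨y⟩
  -- a function giving an element above any given element
  have hsucc : ∀ x : L, ∃ y, x < y := by
    intro x
    obtain ⟨y, hy, -⟩ := heta {x} ∅ (Set.countable_singleton x) Set.countable_empty (by simp)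
    exact ⟨y, hy x rfl⟩
  have hdense : DenselyOrdered L := by
    constructor
    intro a b hab
    obtain ⟨y, h1, h2⟩ := heta {a} {b} (Set.countable_singleton a) (Set.countable_singleton b)
      (by simpa using hab)
    exact ⟨y, h1 a rfl, h2 b rfl⟩
  have hnt : Nontrivial L := by
    obtain ⟨x⟩ := hne
    obtain ⟨y, hy⟩ := hsucc x
    exact ⟨x, y, hy.ne⟩
  -- continuum bound via an embedding of ℚ and filling cuts for reals
  obtain ⟨e⟩ : Nonempty (ℚ ↪o L) := @Order.embedding_from_countable_to_dense ℚ L _ _ _ hdense hnt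
  have hcont : Cardinal.continuum ≤ Cardinal.mk L := by
    have key : ∀ r : ℝ, ∃ y : L, (∀ q : ℚ, (q : ℝ) < r → e q < y) ∧
        (∀ q : ℚ, r < (q : ℝ) → y < e q) := by
      intro r
      have hsep : ∀ a ∈ e '' {q : ℚ | (q : ℝ) < r}, ∀ b ∈ e '' {q : ℚ | r < (q : ℝ)},
          a < b := by
        rintro _ ⟨p, hp, rfl⟩ _ ⟨q, hq, rfl⟩
        simp only [Set.mem_setOf_eq] at hp hq
        exact e.strictMono (by exact_mod_cast hp.trans hq)
      obtain ⟨y, h1, h2⟩ := heta (e '' {q : ℚ | (q : ℝ) < r}) (e '' {q : ℚ | r < (q : ℝ)})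
        ((Set.to_countable _).image e) ((Set.to_countable _).image e) hsep
      exact ⟨y, fun q hq => h1 _ ⟨q, hq, rfl⟩, fun q hq => h2 _ ⟨q, hq, rfl⟩⟩
    choose g hg1 hg2 using key
    have hmono : StrictMono g := by
      intro r s hrs
      obtain ⟨q, hq1, hq2⟩ := exists_rat_btwn hrs
      exact (hg2 r q hq1).trans (hg1 s q hq2)
    have hle : Cardinal.lift.{_} (Cardinal.mk ℝ) ≤ Cardinal.lift.{0} (Cardinal.mk L) :=
      Cardinal.lift_mk_le'.2 ⟨⟨g, hmono.injective⟩⟩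
    simpa [Cardinal.mk_real, Cardinal.lift_continuum, Cardinal.lift_id] using hle
  refine ⟨?_, Cardinal.aleph_one_le_continuum.trans hcont, hcont⟩
  -- not Dedekind complete
  intro hcomp
  obtain ⟨x0⟩ := hne
  set f : L → L := fun x => (hsucc x).choose with hf
  have hfx : ∀ x, x < f x := fun x => (hsucc x).choose_spec
  set a : ℕ → L := fun n => f^[n] x0 with ha
  have hstep : ∀ n, a n < a (n + 1) := by
    intro n
    have : a (n + 1) = f (a n) := by
      simp [ha, Function.iterate_succ_apply']
    rw [this]; exact hfx _
  have hamono : StrictMono a := strictMono_nat_of_lt_succ hstep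
  have hbdd : BddAbove (Set.range a) := by
    obtain ⟨y, hy, -⟩ := heta (Set.range a) ∅ (Set.countable_range a) Set.countable_empty
      (by simp)
    exact ⟨y, by rintro _ ⟨n, rfl⟩; exact (hy _ ⟨n, rfl⟩).le⟩
  obtain ⟨s, hs⟩ := hcomp (Set.range a) ⟨a 0, ⟨0, rfl⟩⟩ hbdd
  have hlt : ∀ n, a n < s := fun n =>
    lt_of_lt_of_le (hstep n) (hs.1 ⟨n + 1, rfl⟩)
  obtain ⟨y, hy1, hy2⟩ := heta (Set.range a) {s} (Set.countable_range a)
    (Set.countable_singleton s) (by rintro _ ⟨n, rfl⟩ b rfl; exact hlt n)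
  have : s ≤ y := hs.2 (by rintro _ ⟨n, rfl⟩; exact (hy1 _ ⟨n, rfl⟩).le)
  exact absurd (hy2 s rfl) this.not_gt
end

section
/- Any two η₁-ordered sets of cardinality ℵ₁ are order-isomorphic. -/
/-!
Transfinite back-and-forth of length `ω₁`. Enumerate both orders by the countable ordinals and
build an increasing chain of partial isomorphisms, taking unions at limit stages. Every stage is
countable, so the η₁ property finds an image for the next point of `L` in the cut of `M` it
determines, and symmetrically a preimage for the next point of `M`. The union of the chain is
then an order isomorphism.
-/

open Cardinal Function Set

def IsEtaOne (α : Type*) [LinearOrder α] : Prop :=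
  ∀ A B : Set α, A.Countable → B.Countable → (∀ a ∈ A, ∀ b ∈ B, a < b) →
    ∃ y : α, (∀ a ∈ A, a < y) ∧ (∀ b ∈ B, y < b)

section PartialIso

variable {L M : Type*} [LinearOrder L] [LinearOrder M]

/-- `G` is the graph of an order isomorphism between a subset of `L` and a subset of `M`. -/
def IsPartialIso (G : Set (L × M)) : Prop :=
  ∀ p ∈ G, ∀ q ∈ G, (p.1 < q.1 ↔ p.2 < q.2)

theorem IsPartialIso.swap {G : Set (L × M)} (hG : IsPartialIso G) :
    IsPartialIso (Prod.swap ⁻¹' G) :=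
  fun _ hp _ hq => (hG _ hp _ hq).symm

theorem isPartialIso_iUnion_of_directed {ι : Sort*} {F : ι → Set (L × M)}
    (hF : Directed (· ⊆ ·) F) (h : ∀ i, IsPartialIso (F i)) : IsPartialIso (⋃ i, F i) := by
  intro p hp q hq
  obtain ⟨i, hp⟩ := mem_iUnion.1 hp
  obtain ⟨j, hq⟩ := mem_iUnion.1 hq
  obtain ⟨k, hik, hjk⟩ := hF i j
  exact h k p (hik hp) q (hjk hq)

theorem isPartialIso_insert {G : Set (L × M)} (hG : IsPartialIso G) {x : L} {y : M}
    (h : ∀ r ∈ G, (r.1 < x ↔ r.2 < y) ∧ (x < r.1 ↔ y < r.2)) :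
    IsPartialIso (insert (x, y) G) := by
  rintro p (rfl | hp) q (rfl | hq)
  · simp
  · exact (h q hq).2
  · exact (h p hp).1
  · exact hG p hp q hq

theorem IsPartialIso.exists_insert_fst (hM : IsEtaOne M) {G : Set (L × M)}
    (hG : IsPartialIso G) (hGc : G.Countable) (x : L) : ∃ y, IsPartialIso (insert (x, y) G) := by
  by_cases hx : ∃ p ∈ G, p.1 = x
  · obtain ⟨p, hp, rfl⟩ := hx
    exact ⟨p.2, isPartialIso_insert hG fun r hr => ⟨hG r hr p hp, hG p hp r hr⟩⟩
  push Not at hx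
  obtain ⟨y, hbelow, habove⟩ :=
    hM (Prod.snd '' {p ∈ G | p.1 < x}) (Prod.snd '' {p ∈ G | x < p.1})
      ((hGc.mono (sep_subset _ _)).image _) ((hGc.mono (sep_subset _ _)).image _)
      (by
        rintro _ ⟨p, ⟨hp, hpx⟩, rfl⟩ _ ⟨q, ⟨hq, hxq⟩, rfl⟩
        exact (hG p hp q hq).1 (hpx.trans hxq))
  refine ⟨y, isPartialIso_insert hG fun r hr => ?_⟩
  rcases (hx r hr).lt_or_gt with hrx | hxr
  · have hry := hbelow _ ⟨r, ⟨hr, hrx⟩, rfl⟩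
    exact ⟨iff_of_true hrx hry, iff_of_false hrx.not_gt hry.not_gt⟩
  · have hyr := habove _ ⟨r, ⟨hr, hxr⟩, rfl⟩
    exact ⟨iff_of_false hxr.not_gt hyr.not_gt, iff_of_true hxr hyr⟩

theorem IsPartialIso.exists_insert_snd (hL : IsEtaOne L) {G : Set (L × M)}
    (hG : IsPartialIso G) (hGc : G.Countable) (y : M) : ∃ x, IsPartialIso (insert (x, y) G) := by
  obtain ⟨x, hx⟩ := hG.swap.exists_insert_fst hL (hGc.preimage Prod.swap_injective) y
  refine ⟨x, ?_⟩
  convert hx.swap using 1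
  ext ⟨a, b⟩
  simp [and_comm]

theorem IsPartialIso.exists_extend (hL : IsEtaOne L) (hM : IsEtaOne M) {G : Set (L × M)}
    (hG : IsPartialIso G) (hGc : G.Countable) (x : L) (y : M) :
    ∃ G', G ⊆ G' ∧ IsPartialIso G' ∧ G'.Countable ∧ (∃ b, (x, b) ∈ G') ∧ ∃ a, (a, y) ∈ G' := by
  obtain ⟨b, hb⟩ := hG.exists_insert_fst hM hGc x
  obtain ⟨a, ha⟩ := hb.exists_insert_snd hL (hGc.insert _) y
  exact ⟨_, (subset_insert _ _).trans (subset_insert _ _), ha, (hGc.insert _).insert _,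
    ⟨b, mem_insert_of_mem _ (mem_insert _ _)⟩, ⟨a, mem_insert _ _⟩⟩

theorem IsPartialIso.nonempty_orderIso {G : Set (L × M)} (hG : IsPartialIso G)
    (hfst : ∀ x, ∃ y, (x, y) ∈ G) (hsnd : ∀ y, ∃ x, (x, y) ∈ G) : Nonempty (L ≃o M) := by
  choose f hf using hfst
  have hf_mono : StrictMono f := fun x x' h => (hG _ (hf x) _ (hf x')).1 h
  refine ⟨hf_mono.orderIsoOfSurjective f fun y => ?_⟩
  obtain ⟨x, hx⟩ := hsnd y
  refine ⟨x, le_antisymm (not_lt.1 fun h => ?_) (not_lt.1 fun h => ?_)⟩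
  · exact ((hG _ hx _ (hf x)).2 h).false
  · exact ((hG _ (hf x) _ hx).2 h).false

end PartialIso

section BackAndForth

variable {L M ι : Type*} [LinearOrder L] [LinearOrder M] [LinearOrder ι] [WellFoundedLT ι]
  (hL : IsEtaOne L) (hM : IsEtaOne M) (eL : ι → L) (eM : ι → M)

open Classical in
noncomputable def extendStep (G : Set (L × M)) (x : L) (y : M) : Set (L × M) :=
  if h : IsPartialIso G ∧ G.Countable then (h.1.exists_extend hL hM h.2 x y).choose else G

theorem subset_extendStep (G : Set (L × M)) (x : L) (y : M) : G ⊆ extendStep hL hM G x y := by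
  unfold extendStep
  split_ifs with h
  · exact (h.1.exists_extend hL hM h.2 x y).choose_spec.1
  · rfl

theorem extendStep_spec {G : Set (L × M)} (hG : IsPartialIso G) (hGc : G.Countable)
    (x : L) (y : M) :
    IsPartialIso (extendStep hL hM G x y) ∧ (extendStep hL hM G x y).Countable ∧
      (∃ b, (x, b) ∈ extendStep hL hM G x y) ∧ ∃ a, (a, y) ∈ extendStep hL hM G x y := by
  rw [extendStep, dif_pos ⟨hG, hGc⟩]
  exact (hG.exists_extend hL hM hGc x y).choose_spec.2

noncomputable def backAndForth : ι → Set (L × M) :=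
  wellFounded_lt.fix fun i (F : ∀ j < i, Set (L × M)) => extendStep hL hM (⋃ j : Iio i, F j j.2) (eL i) (eM i)

theorem backAndForth_eq (i : ι) :
    backAndForth hL hM eL eM i =
      extendStep hL hM (⋃ j : Iio i, backAndForth hL hM eL eM j) (eL i) (eM i) :=
  wellFounded_lt.fix_eq _ i

theorem backAndForth_mono : Monotone (backAndForth hL hM eL eM) := by
  refine monotone_iff_forall_lt.2 fun j i hji => ?_
  rw [backAndForth_eq hL hM eL eM i]
  exact (subset_iUnion (fun k : Iio i => backAndForth hL hM eL eM k) ⟨j, hji⟩).trans (subset_extendStep hL hM _ _ _)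

theorem backAndForth_spec (hι : ∀ i : ι, (Iio i).Countable) (i : ι) :
    IsPartialIso (backAndForth hL hM eL eM i) ∧ (backAndForth hL hM eL eM i).Countable ∧
      (∃ b, (eL i, b) ∈ backAndForth hL hM eL eM i) ∧
      ∃ a, (a, eM i) ∈ backAndForth hL hM eL eM i := by
  induction i using WellFoundedLT.induction with
  | _ i ih =>
  have := (hι i).to_subtype
  rw [backAndForth_eq]
  refine extendStep_spec hL hM (isPartialIso_iUnion_of_directed ?_ fun j : Iio i => (ih j j.2).1)
    (countable_iUnion fun j : Iio i => (ih j j.2).2.1) _ _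
  exact ((backAndForth_mono hL hM eL eM).comp (Subtype.mono_coe _)).directed_le

end BackAndForth

theorem IsEtaOne.nonempty_orderIso_of_surjective {L M ι : Type*} [LinearOrder L] [LinearOrder M]
    [LinearOrder ι] [WellFoundedLT ι] (hL : IsEtaOne L) (hM : IsEtaOne M)
    (hι : ∀ i : ι, (Iio i).Countable) {eL : ι → L} {eM : ι → M} (heL : Surjective eL)
    (heM : Surjective eM) : Nonempty (L ≃o M) := by
  have hspec := backAndForth_spec hL hM eL eM hι
  refine (isPartialIso_iUnion_of_directed (backAndForth_mono hL hM eL eM).directed_le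
    fun i => (hspec i).1).nonempty_orderIso (fun x => ?_) fun y => ?_
  · obtain ⟨i, rfl⟩ := heL x
    obtain ⟨b, hb⟩ := (hspec i).2.2.1
    exact ⟨b, mem_iUnion_of_mem i hb⟩
  · obtain ⟨i, rfl⟩ := heM y
    obtain ⟨a, ha⟩ := (hspec i).2.2.2
    exact ⟨a, mem_iUnion_of_mem i ha⟩

/-- Any two η₁-ordered sets of cardinality ℵ₁ are order-isomorphic. -/
theorem eta_one_aleph_one_unique
    (L M : Type*) [LinearOrder L] [LinearOrder M]
    (hL : ∀ A B : Set L, A.Countable → B.Countable → (∀ a ∈ A, ∀ b ∈ B, a < b) →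
      ∃ y : L, (∀ a ∈ A, a < y) ∧ (∀ b ∈ B, y < b))
    (hM : ∀ A B : Set M, A.Countable → B.Countable → (∀ a ∈ A, ∀ b ∈ B, a < b) →
      ∃ y : M, (∀ a ∈ A, a < y) ∧ (∀ b ∈ B, y < b))
    (hcardL : Cardinal.mk L = Cardinal.aleph 1)
    (hcardM : Cardinal.mk M = Cardinal.aleph 1) :
    Nonempty (L ≃o M) := by
  have hmk : #(ℵ₁).ord.ToType = ℵ₁ := mk_ord_toType _
  have hι : ∀ i : (ℵ₁).ord.ToType, (Iio i).Countable := fun i =>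
    le_aleph0_iff_set_countable.1 (lt_aleph_one_iff.1 ((mk_Iio_lt i (by simp)).trans_eq hmk))
  obtain ⟨eL⟩ := Cardinal.eq.1 (hmk.trans hcardL.symm)
  obtain ⟨eM⟩ : Nonempty ((ℵ₁).ord.ToType ≃ M) := lift_mk_eq'.1 (by simp [hcardM])
  exact IsEtaOne.nonempty_orderIso_of_surjective hL hM hι eL.surjective eM.surjective
end

section
/- There exist two strictly increasing functions f, g : ℝ⁺ → ℝ⁺, both tending to +∞, such that f(x)/g(x) has no limit (finite or infinite) as x → ∞; hence the infinities of increasing functions tending to infinity are not totally ordered by du Bois-Reymond's comparison (the Stolz–Pincherle–Cantor incomparability result). -/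
/-!
Take `f x = x` and `g x = x (2 + sin (log x))`. Since `g' = 2 + sin (log x) + cos (log x) > 0`,
`g` is strictly increasing, and `g ≥ x` makes it tend to infinity. The ratio
`f / g = (2 + sin (log x))⁻¹` becomes, after the substitution `x = exp t`, a non-constant
`2π`-periodic function of `t`, which can tend to no limit, finite or infinite.
-/

open Filter Real

namespace Function.Periodic

variable {R α : Type*} [AddCommGroup R] [LinearOrder R] [IsOrderedAddMonoid R] [Archimedean R]
  {φ : R → α} {p : R}

theorem tendsto_const_of_tendsto_atTop (hφ : Periodic φ p) (hp : 0 < p) {l : Filter α}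
    (h : Tendsto φ atTop l) (t : R) : Tendsto (fun _ : ℕ => φ t) atTop l := by
  have hshift : Tendsto (fun n : ℕ => t + n • p) atTop atTop :=
    tendsto_atTop_add_const_left _ t (tendsto_id.atTop_nsmul_const hp)
  exact (h.comp hshift).congr fun n => (hφ.nsmul n) t

theorem not_tendsto_nhds [TopologicalSpace α] [T1Space α] (hφ : Periodic φ p) (hp : 0 < p)
    {s t : R} (hst : φ s ≠ φ t) (l : α) : ¬Tendsto φ atTop (nhds l) := fun h =>
  hst <| (tendsto_const_nhds_iff.mp (hφ.tendsto_const_of_tendsto_atTop hp h s)).trans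
    (tendsto_const_nhds_iff.mp (hφ.tendsto_const_of_tendsto_atTop hp h t)).symm

theorem not_tendsto_atTop [Preorder α] [NoTopOrder α] (hφ : Periodic φ p) (hp : 0 < p) :
    ¬Tendsto φ atTop atTop := fun h =>
  not_tendsto_const_atTop _ _ (hφ.tendsto_const_of_tendsto_atTop hp h 0)

theorem not_tendsto_atBot [Preorder α] [NoBotOrder α] (hφ : Periodic φ p) (hp : 0 < p) :
    ¬Tendsto φ atTop atBot := fun h =>
  not_tendsto_const_atBot _ _ (hφ.tendsto_const_of_tendsto_atTop hp h 0)

end Function.Periodic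

theorem one_le_two_add_sin (t : ℝ) : 1 ≤ 2 + sin t := by
  linarith [neg_one_le_sin t]

theorem two_add_sin_add_cos_pos (t : ℝ) : 0 < 2 + sin t + cos t := by
  nlinarith [sin_sq_add_cos_sq t, sq_nonneg (sin t - cos t)]

theorem periodic_inv_two_add_sin : Function.Periodic (fun t => (2 + sin t)⁻¹) (2 * π) :=
  sin_periodic.comp fun s => (2 + s)⁻¹

theorem hasDerivAt_mul_two_add_sin_log {x : ℝ} (hx : 0 < x) :
    HasDerivAt (fun x => x * (2 + sin (log x))) (2 + sin (log x) + cos (log x)) x := by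
  have hsin : HasDerivAt (fun x => 2 + sin (log x)) (cos (log x) * x⁻¹) x :=
    ((hasDerivAt_sin _).comp x (hasDerivAt_log hx.ne')).const_add 2
  refine ((hasDerivAt_id' x).mul hsin).congr_deriv ?_
  field_simp

theorem strictMonoOn_mul_two_add_sin_log :
    StrictMonoOn (fun x => x * (2 + sin (log x))) (Set.Ioi 0) := by
  refine strictMonoOn_of_deriv_pos (convex_Ioi 0)
    (fun x hx => (hasDerivAt_mul_two_add_sin_log hx).continuousAt.continuousWithinAt)
    fun x hx => ?_
  rw [interior_Ioi] at hx
  rw [(hasDerivAt_mul_two_add_sin_log hx).deriv]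
  exact two_add_sin_add_cos_pos _

theorem tendsto_mul_two_add_sin_log_atTop :
    Tendsto (fun x => x * (2 + sin (log x))) atTop atTop :=
  tendsto_atTop_mono' atTop
    ((eventually_ge_atTop 0).mono fun _ hx => le_mul_of_one_le_right hx (one_le_two_add_sin _))
    tendsto_id

theorem tendsto_inv_two_add_sin_of_tendsto_div {l : Filter ℝ}
    (h : Tendsto (fun x => x / (x * (2 + sin (log x)))) atTop l) :
    Tendsto (fun t => (2 + sin t)⁻¹) atTop l :=
  (h.comp tendsto_exp_atTop).congr fun t => by
    simp [div_mul_eq_div_div]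

/-- There exist strictly increasing positive functions tending to +∞ whose ratio
has no limit, finite or infinite (Stolz–Pincherle–Cantor incomparability). -/
theorem exists_incomparable_increasing_functions :
    ∃ f g : ℝ → ℝ,
      (∀ x > (0:ℝ), 0 < f x) ∧ (∀ x > (0:ℝ), 0 < g x) ∧
      StrictMonoOn f (Set.Ioi 0) ∧ StrictMonoOn g (Set.Ioi 0) ∧
      Tendsto f atTop atTop ∧ Tendsto g atTop atTop ∧
      ¬(∃ l : ℝ, Tendsto (fun x => f x / g x) atTop (nhds l)) ∧
      ¬Tendsto (fun x => f x / g x) atTop atTop ∧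
      ¬Tendsto (fun x => f x / g x) atTop atBot := by
  refine ⟨fun x => x, fun x => x * (2 + sin (log x)), fun x hx => hx,
    fun x hx => mul_pos hx (zero_lt_one.trans_le (one_le_two_add_sin _)),
    fun _ _ _ _ h => h, strictMonoOn_mul_two_add_sin_log, tendsto_id,
    tendsto_mul_two_add_sin_log_atTop, ?_, ?_, ?_⟩
  · rintro ⟨l, hl⟩
    exact periodic_inv_two_add_sin.not_tendsto_nhds two_pi_pos
      (s := π / 2) (t := -(π / 2)) (by norm_num) l (tendsto_inv_two_add_sin_of_tendsto_div hl)
  · exact fun h => periodic_inv_two_add_sin.not_tendsto_atTop two_pi_pos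
      (tendsto_inv_two_add_sin_of_tendsto_div h)
  · exact fun h => periodic_inv_two_add_sin.not_tendsto_atBot two_pi_pos
      (tendsto_inv_two_add_sin_of_tendsto_div h)
end
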